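/- arXiv:1807.00034 — 5 statements merged into one kernel-verified Lean document; each statement's English description precedes it below -/
import Mathlib

section
/- Let 0 < α < β. Then for every n ≥ 1 the exceptional zero x̂_{n,n}^{(α,β)} of the X₁-Jacobi polynomial P̂_n^{(α,β)} satisfies b < x̂_{n,n}^{(α,β)} ≤ ((2n+α+β)/(2n−2+α+β))·b. -/
open Finset Filter

/-- The Jacobi polynomial `P_n^{(α,β)}(x)` via its explicit sum representation. -/
noncomputable def jacobiP (α β : ℝ) (n : ℕ) (x : ℝ) : ℝ :=
  ∑ s ∈ Finset.range (n + 1),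
    ((∏ j ∈ Finset.Icc (s + 1) n, (α + (j : ℝ))) / (Nat.factorial (n - s) : ℝ)) *
      ((∏ j ∈ Finset.Icc (n - s + 1) n, (β + (j : ℝ))) / (Nat.factorial s : ℝ)) *
      ((x - 1) / 2) ^ s * ((x + 1) / 2) ^ (n - s)

/-- The X₁-Jacobi polynomial `P̂_n^{(α,β)}(x)` for `n ≥ 1`, with `b = (β+α)/(β-α)`. -/
noncomputable def X1jacobiP (α β : ℝ) (n : ℕ) (x : ℝ) : ℝ :=
  -(1 / 2) * (x - (β + α) / (β - α)) * jacobiP α β (n - 1) x +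
    ((β + α) / (β - α) * jacobiP α β (n - 1) x -
        (if 2 ≤ n then jacobiP α β (n - 2) x else 0)) / (2 * (n : ℝ) - 2 + α + β)

/-- The generalized Laguerre polynomial `L_n^{(α)}(x)` via its explicit sum representation. -/
noncomputable def laguerreL (α : ℝ) (n : ℕ) (x : ℝ) : ℝ :=
  ∑ k ∈ Finset.range (n + 1),
    (-1 : ℝ) ^ k / (Nat.factorial k : ℝ) *
      ((∏ j ∈ Finset.Icc (k + 1) n, (α + (j : ℝ))) / (Nat.factorial (n - k) : ℝ)) * x ^ k

/-- The X₁-Laguerre polynomial `L̂_n^{(α)}(x)` for `n ≥ 1`. -/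
noncomputable def X1laguerreL (α : ℝ) (n : ℕ) (x : ℝ) : ℝ :=
  -(x + α + 1) * laguerreL α (n - 1) x + (if 2 ≤ n then laguerreL α (n - 2) x else 0)

/-- The physicist's Hermite polynomial `H_m(x)`. -/
noncomputable def hermiteH (m : ℕ) (x : ℝ) : ℝ :=
  (Nat.factorial m : ℝ) *
    ∑ j ∈ Finset.range (m / 2 + 1),
      (-1 : ℝ) ^ j / ((Nat.factorial j : ℝ) * (Nat.factorial (m - 2 * j) : ℝ)) *
        (2 * x) ^ (m - 2 * j)

/-- `z 1 < z 2 < … < z n` enumerates, in increasing order, all real zeros of `f`. -/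
def EnumZeros (f : ℝ → ℝ) (n : ℕ) (z : ℕ → ℝ) : Prop :=
  StrictMonoOn z (Set.Icc 1 n) ∧ ∀ x : ℝ, f x = 0 ↔ ∃ k, 1 ≤ k ∧ k ≤ n ∧ x = z k

/-!
Write `b = (β+α)/(β-α)`, `K = 2n-2+α+β`, `c = (2n+α+β)/K` and `P_m = P_m^{(α,β)}`. For `α, β ≥ 0`
the coefficients of `P_m` in the powers of `(x-1)/2` and `(x+1)/2` are nonnegative and grow with `m`,
so `1 = P_0 ≤ P_1 ≤ ⋯` on `[1, ∞)`. Since `c = 1 + 2/K`, the definition of `P̂_n` rearranges to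
`P̂_n(x) = -(x - c b) P_{n-1}(x)/2 - P_{n-2}(x)/K`. Hence `P̂_n < 0` on `(c b, ∞)` and `P̂_n(c b) ≤ 0`,
while `P̂_n(b) = (b P_{n-1}(b) - P_{n-2}(b))/K > 0` because `b > 1`. So `P̂_n` has a zero in
`(b, c b]` and none beyond `c b`, which traps its largest zero in `(b, c b]`.
-/

theorem Finset.prod_Icc_le_prod_Icc_succ {R : Type*} [CommSemiring R] [PartialOrder R]
    [IsOrderedRing R] {f : ℕ → R} (hf₀ : ∀ j, 0 ≤ f j) (hf : Monotone f) (a b : ℕ) :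
    ∏ j ∈ Icc a b, f j ≤ ∏ j ∈ Icc (a + 1) (b + 1), f j := by
  rw [← map_add_right_Icc, prod_map]
  exact prod_le_prod (fun j _ => hf₀ j) fun j _ => hf j.le_succ

section Jacobi

variable {α β x : ℝ}

theorem jacobiP_zero (α β x : ℝ) : jacobiP α β 0 x = 1 := by
  simp [jacobiP]

theorem continuous_jacobiP (α β : ℝ) (n : ℕ) : Continuous (jacobiP α β n) := by
  unfold jacobiP
  fun_prop

/- The two factors of the coefficients of `P_m` are the generalized binomial coefficients
`C(α+m, m-s)` and `C(β+m, s)`; with `m = s + t`, both grow when `m` increases. -/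

theorem jacobiP_alpha_coeff_le_succ (hα : 0 ≤ α) (s t : ℕ) :
    (∏ j ∈ Icc (s + 1) (s + t), (α + j)) / (t.factorial : ℝ) ≤
      (∏ j ∈ Icc (s + 1) (s + t + 1), (α + j)) / ((t + 1).factorial : ℝ) := by
  rw [prod_Icc_succ_top (by omega), Nat.factorial_succ]
  have hratio : 1 ≤ (α + ((s + t + 1 : ℕ) : ℝ)) / ((t + 1 : ℕ) : ℝ) := by
    rw [one_le_div (by positivity)]
    push_cast
    linarith [(s.cast_nonneg : (0 : ℝ) ≤ s)]
  calc (∏ j ∈ Icc (s + 1) (s + t), (α + j)) / (t.factorial : ℝ)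
      ≤ (∏ j ∈ Icc (s + 1) (s + t), (α + j)) / (t.factorial : ℝ) *
          ((α + ((s + t + 1 : ℕ) : ℝ)) / ((t + 1 : ℕ) : ℝ)) :=
        le_mul_of_one_le_right (by positivity) hratio
    _ = _ := by push_cast; field_simp

theorem jacobiP_beta_coeff_le_succ (hβ : 0 ≤ β) (s t : ℕ) :
    (∏ j ∈ Icc (t + 1) (s + t), (β + j)) / (s.factorial : ℝ) ≤
      (∏ j ∈ Icc (t + 1 + 1) (s + t + 1), (β + j)) / (s.factorial : ℝ) := by
  refine div_le_div_of_nonneg_right ?_ (by positivity)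
  exact prod_Icc_le_prod_Icc_succ (f := fun j => β + j) (fun j => by positivity)
    (fun i j h => by simpa using h) _ _

theorem jacobiP_le_succ (hα : 0 ≤ α) (hβ : 0 ≤ β) (hx : 1 ≤ x) (m : ℕ) :
    jacobiP α β m x ≤ jacobiP α β (m + 1) x := by
  have hu : 0 ≤ (x - 1) / 2 := by linarith
  have hv : 1 ≤ (x + 1) / 2 := by linarith
  unfold jacobiP
  rw [sum_range_succ _ (m + 1)]
  refine le_add_of_le_of_nonneg (sum_le_sum fun s hs => ?_) (by positivity)
  obtain ⟨t, rfl⟩ := Nat.exists_eq_add_of_le (Nat.lt_succ_iff.mp (mem_range.mp hs))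
  rw [show s + t + 1 - s = t + 1 by omega, Nat.add_sub_cancel_left]
  gcongr ?_ * ?_ * _ * ?_
  · exact jacobiP_alpha_coeff_le_succ hα s t
  · exact jacobiP_beta_coeff_le_succ hβ s t
  · exact pow_le_pow_right₀ hv t.le_succ

theorem jacobiP_monotone (hα : 0 ≤ α) (hβ : 0 ≤ β) (hx : 1 ≤ x) :
    Monotone fun m => jacobiP α β m x :=
  monotone_nat_of_le_succ (jacobiP_le_succ hα hβ hx)

theorem one_le_jacobiP (hα : 0 ≤ α) (hβ : 0 ≤ β) (hx : 1 ≤ x) (m : ℕ) :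
    1 ≤ jacobiP α β m x :=
  jacobiP_zero α β x ▸ jacobiP_monotone hα hβ hx m.zero_le

end Jacobi

theorem EnumZeros.apply_last_eq_zero {f : ℝ → ℝ} {n : ℕ} {z : ℕ → ℝ} (h : EnumZeros f n z)
    (hn : 1 ≤ n) : f (z n) = 0 :=
  (h.2 _).2 ⟨n, hn, le_rfl, rfl⟩

theorem EnumZeros.le_last {f : ℝ → ℝ} {n : ℕ} {z : ℕ → ℝ} (h : EnumZeros f n z) {y : ℝ}
    (hy : f y = 0) : y ≤ z n := by
  obtain ⟨k, hk, hkn, rfl⟩ := (h.2 y).1 hy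
  exact h.1.monotoneOn ⟨hk, hkn⟩ ⟨hk.trans hkn, le_rfl⟩ hkn

noncomputable def X1jacobiZeroBound (α β : ℝ) (n : ℕ) : ℝ :=
  (2 * n + α + β) / (2 * n - 2 + α + β) * ((β + α) / (β - α))

section X1Jacobi

variable {α β x : ℝ} {n : ℕ}

theorem continuous_X1jacobiP (α β : ℝ) (n : ℕ) : Continuous (X1jacobiP α β n) := by
  have := continuous_jacobiP α β (n - 1)
  have := continuous_jacobiP α β (n - 2)
  unfold X1jacobiP
  split_ifs <;> fun_prop

theorem X1jacobiP_eq (hK : 2 * (n : ℝ) - 2 + α + β ≠ 0) (x : ℝ) :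
    X1jacobiP α β n x =
      -(1 / 2) * (x - X1jacobiZeroBound α β n) * jacobiP α β (n - 1) x -
        (if 2 ≤ n then jacobiP α β (n - 2) x else 0) / (2 * n - 2 + α + β) := by
  have hc : (2 * n + α + β) / (2 * n - 2 + α + β) = 1 + 2 / (2 * n - 2 + α + β) := by
    rw [one_add_div hK]
    ring
  rw [X1jacobiP, X1jacobiZeroBound, hc]
  ring

variable (hα : 0 ≤ α) (hβ : 0 ≤ β) (hK : 0 < 2 * (n : ℝ) - 2 + α + β)
include hα hβ hK

theorem X1jacobiP_le (hx : 1 ≤ x) :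
    X1jacobiP α β n x ≤ -(1 / 2) * (x - X1jacobiZeroBound α β n) * jacobiP α β (n - 1) x := by
  have hQ : 0 ≤ if 2 ≤ n then jacobiP α β (n - 2) x else 0 := by
    split_ifs
    exacts [zero_le_one.trans (one_le_jacobiP hα hβ hx _), le_rfl]
  rw [X1jacobiP_eq hK.ne']
  linarith [div_nonneg hQ hK.le]

theorem X1jacobiP_neg_of_lt (hx : 1 ≤ x) (h : X1jacobiZeroBound α β n < x) :
    X1jacobiP α β n x < 0 := by
  have hP := one_le_jacobiP hα hβ hx (n - 1)
  nlinarith [X1jacobiP_le hα hβ hK hx]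

theorem X1jacobiP_pos (hb : 1 < (β + α) / (β - α)) : 0 < X1jacobiP α β n ((β + α) / (β - α)) := by
  set b := (β + α) / (β - α)
  have hP := one_le_jacobiP hα hβ hb.le (n - 1)
  have hQ : (if 2 ≤ n then jacobiP α β (n - 2) b else 0) ≤ jacobiP α β (n - 1) b := by
    split_ifs
    exacts [jacobiP_monotone hα hβ hb.le (by omega), by linarith]
  rw [X1jacobiP, sub_self, mul_zero, zero_mul, zero_add]
  exact div_pos (by nlinarith) hK

theorem exists_X1jacobiP_eq_zero (hb : 1 < (β + α) / (β - α)) :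
    ∃ y ∈ Set.Ioc ((β + α) / (β - α)) (X1jacobiZeroBound α β n), X1jacobiP α β n y = 0 := by
  have hbc : (β + α) / (β - α) ≤ X1jacobiZeroBound α β n :=
    le_mul_of_one_le_left (by linarith) ((one_le_div hK).2 (by linarith))
  have hbound : X1jacobiP α β n (X1jacobiZeroBound α β n) ≤ 0 := by
    simpa using X1jacobiP_le hα hβ hK (hb.le.trans hbc)
  exact intermediate_value_Ioc' hbc (continuous_X1jacobiP α β n).continuousOn
    ⟨hbound, X1jacobiP_pos hα hβ hK hb⟩

end X1Jacobi

/-- For `0 < α < β` and `n ≥ 1`, the exceptional zero of the X₁-Jacobi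
polynomial satisfies `b < x̂_{n,n} ≤ ((2n+α+β)/(2n-2+α+β))·b`. -/
theorem X1jacobi_exceptional_zero_bounds
    (α β : ℝ) (hα : 0 < α) (hαβ : α < β)
    (b : ℝ) (hb : b = (β + α) / (β - α))
    (z : ℕ → ℕ → ℝ)
    (hz : ∀ n : ℕ, 1 ≤ n → EnumZeros (X1jacobiP α β n) n (z n)) :
    ∀ n : ℕ, 1 ≤ n →
      b < z n n ∧ z n n ≤ (2 * (n : ℝ) + α + β) / (2 * (n : ℝ) - 2 + α + β) * b := by
  intro n hn
  subst hb
  have hβ : 0 < β := hα.trans hαβ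
  have hb : 1 < (β + α) / (β - α) := by rw [one_lt_div (by linarith)]; linarith
  have hK : 0 < 2 * (n : ℝ) - 2 + α + β := by
    have : (1 : ℝ) ≤ n := by exact_mod_cast hn
    linarith
  obtain ⟨y, ⟨hby, -⟩, hy⟩ := exists_X1jacobiP_eq_zero hα.le hβ.le hK hb
  have hlower := hby.trans_le ((hz n hn).le_last hy)
  refine ⟨hlower, not_lt.1 fun hupper => ?_⟩
  exact (X1jacobiP_neg_of_lt hα.le hβ.le hK (hb.trans hlower).le hupper).ne
    ((hz n hn).apply_last_eq_zero hn)
end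

section
/- Let α > 0. Then the exceptional zero x̂_{n,1}^{(α)} of the X₁-Laguerre polynomial L̂_n^{(α)} satisfies x̂_{1,1}^{(α)} = −(α+1) and, for every n ≥ 2, x̂_{n,1}^{(α)} ∈ (−α−1, −α); in particular x̂_{n,1}^{(α)} ∈ [−α−1, −α) for all n ≥ 1. -/
open Finset Filter

/-! For `α > -1` every term of the sum defining `L_m^{(α)}(x)` is nonnegative when `x ≤ 0`, and the
constant term is positive, so `L_m^{(α)} > 0` on `(-∞, 0]`; hence `L̂_n^{(α)} > 0` on `(-∞, -α-1]`.
At `x = -α` the Pascal rule `L_{m+1}^{(α)} - L_m^{(α)} = L_{m+1}^{(α-1)}` gives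
`L̂_n^{(α)}(-α) = -L_{n-1}^{(α-1)}(-α) < 0` for `α > 0`. By the intermediate value theorem `L̂_n^{(α)}`
vanishes in `(-α-1, -α)`, which bounds its least zero from above; positivity bounds it from below. -/

/-- The generalized binomial coefficient `binom(n + α, n - k)`; `laguerreCoeff_succ_sub` is its
Pascal rule. -/
noncomputable def laguerreCoeff (α : ℝ) (n k : ℕ) : ℝ :=
  (∏ j ∈ Icc (k + 1) n, (α + (j : ℝ))) / (Nat.factorial (n - k) : ℝ)

theorem laguerreL_eq_sum (α : ℝ) (n : ℕ) (x : ℝ) :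
    laguerreL α n x =
      ∑ k ∈ range (n + 1), (-1 : ℝ) ^ k / k.factorial * laguerreCoeff α n k * x ^ k :=
  rfl

theorem laguerreCoeff_self (α : ℝ) (n : ℕ) : laguerreCoeff α n n = 1 := by
  simp [laguerreCoeff]

theorem laguerreCoeff_pos {α : ℝ} (hα : -1 < α) (n k : ℕ) : 0 < laguerreCoeff α n k := by
  refine div_pos (prod_pos fun j hj => ?_) (by positivity)
  have : (1 : ℝ) ≤ j := by exact_mod_cast (Nat.le_add_left 1 k).trans (mem_Icc.mp hj).1
  linarith

theorem prod_Icc_add_one_sub_one (α : ℝ) {k m : ℕ} (hk : k ≤ m) :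
    ∏ j ∈ Icc (k + 1) (m + 1), (α - 1 + (j : ℝ)) =
      (α + k) * ∏ j ∈ Icc (k + 1) m, (α + (j : ℝ)) := by
  rw [← map_add_right_Icc k m 1, prod_map, ← insert_Icc_add_one_left_eq_Icc hk,
    prod_insert (by simp)]
  congr 1
  · simp only [addRightEmbedding_apply, Nat.cast_add, Nat.cast_one]
    ring
  · refine prod_congr rfl fun j _ => ?_
    simp only [addRightEmbedding_apply, Nat.cast_add, Nat.cast_one]
    ring

theorem laguerreCoeff_succ_sub (α : ℝ) {k m : ℕ} (hk : k ≤ m) :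
    laguerreCoeff α (m + 1) k - laguerreCoeff α m k = laguerreCoeff (α - 1) (m + 1) k := by
  unfold laguerreCoeff
  rw [prod_Icc_add_one_sub_one α hk, prod_Icc_succ_top (by omega), Nat.sub_add_comm hk,
    Nat.factorial_succ]
  push_cast [Nat.cast_sub hk]
  have : (0 : ℝ) < (m - k).factorial := by positivity
  have : (k : ℝ) ≤ m := by exact_mod_cast hk
  have : (0 : ℝ) < (m : ℝ) - k + 1 := by linarith
  field_simp
  ring

theorem laguerreL_succ_sub (α : ℝ) (m : ℕ) (x : ℝ) :
    laguerreL α (m + 1) x - laguerreL α m x = laguerreL (α - 1) (m + 1) x := by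
  simp only [laguerreL_eq_sum, sum_range_succ _ (m + 1), laguerreCoeff_self]
  rw [add_sub_right_comm, ← sum_sub_distrib]
  congr 1
  refine sum_congr rfl fun k hk => ?_
  rw [← laguerreCoeff_succ_sub α (Nat.lt_succ_iff.mp (mem_range.mp hk))]
  ring

theorem laguerreL_zero (α x : ℝ) : laguerreL α 0 x = 1 := by
  simp [laguerreL]

theorem continuous_laguerreL (α : ℝ) (n : ℕ) : Continuous (laguerreL α n) := by
  unfold laguerreL
  fun_prop

theorem laguerreL_pos {α : ℝ} (hα : -1 < α) (n : ℕ) {x : ℝ} (hx : x ≤ 0) :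
    0 < laguerreL α n x := by
  rw [laguerreL_eq_sum]
  refine sum_pos' (fun k _ => ?_) ⟨0, by simp, by simpa using laguerreCoeff_pos hα n 0⟩
  calc 0 ≤ laguerreCoeff α n k / k.factorial * (-x) ^ k :=
        mul_nonneg (div_nonneg (laguerreCoeff_pos hα n k).le (by positivity))
          (pow_nonneg (neg_nonneg.mpr hx) k)
    _ = _ := by rw [neg_pow]; ring

theorem laguerreL_lt_succ {α : ℝ} (hα : 0 < α) (m : ℕ) {x : ℝ} (hx : x ≤ 0) :
    laguerreL α m x < laguerreL α (m + 1) x := by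
  have := laguerreL_pos (by linarith : -1 < α - 1) (m + 1) hx
  rw [← laguerreL_succ_sub] at this
  linarith

theorem X1laguerreL_one (α x : ℝ) : X1laguerreL α 1 x = -(x + α + 1) := by
  simp [X1laguerreL, laguerreL_zero]

theorem X1laguerreL_add_two (α : ℝ) (m : ℕ) (x : ℝ) :
    X1laguerreL α (m + 2) x = -(x + α + 1) * laguerreL α (m + 1) x + laguerreL α m x := by
  simp [X1laguerreL]

theorem continuous_X1laguerreL (α : ℝ) (n : ℕ) : Continuous (X1laguerreL α n) := by
  have := continuous_laguerreL α (n - 1)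
  have := continuous_laguerreL α (n - 2)
  unfold X1laguerreL
  split_ifs <;> fun_prop

theorem X1laguerreL_pos {α : ℝ} (hα : -1 < α) {n : ℕ} (hn : 2 ≤ n) {x : ℝ} (hx : x ≤ -α - 1) :
    0 < X1laguerreL α n x := by
  obtain ⟨m, rfl⟩ := Nat.exists_eq_add_of_le' hn
  rw [X1laguerreL_add_two]
  have := laguerreL_pos hα (m + 1) (by linarith : x ≤ 0)
  have := laguerreL_pos hα m (by linarith : x ≤ 0)
  nlinarith

theorem X1laguerreL_neg_at_neg {α : ℝ} (hα : 0 < α) {n : ℕ} (hn : 2 ≤ n) :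
    X1laguerreL α n (-α) < 0 := by
  obtain ⟨m, rfl⟩ := Nat.exists_eq_add_of_le' hn
  rw [X1laguerreL_add_two]
  have := laguerreL_lt_succ hα m (by linarith : -α ≤ 0)
  linarith

theorem EnumZeros.isLeast {f : ℝ → ℝ} {n : ℕ} {z : ℕ → ℝ} (h : EnumZeros f n z) (hn : 1 ≤ n) :
    IsLeast {x | f x = 0} (z 1) := by
  refine ⟨(h.2 _).2 ⟨1, le_rfl, hn, rfl⟩, fun x hx => ?_⟩
  obtain ⟨k, hk1, hkn, rfl⟩ := (h.2 x).1 hx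
  exact h.1.monotoneOn ⟨le_rfl, hn⟩ ⟨hk1, hkn⟩ hk1

theorem X1laguerreL_least_zero_mem_Ioo {α : ℝ} (hα : 0 < α) {n : ℕ} (hn : 2 ≤ n) {x₀ : ℝ}
    (h : IsLeast {x | X1laguerreL α n x = 0} x₀) : x₀ ∈ Set.Ioo (-α - 1) (-α) := by
  obtain ⟨c, hc, hc0⟩ := intermediate_value_Ioo' (by linarith : -α - 1 ≤ -α)
    (continuous_X1laguerreL α n).continuousOn
    ⟨X1laguerreL_neg_at_neg hα hn, X1laguerreL_pos (by linarith) hn le_rfl⟩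
  refine ⟨?_, (h.2 hc0).trans_lt hc.2⟩
  by_contra! hle
  exact (X1laguerreL_pos (by linarith) hn hle).ne' h.1

/-- For `α > 0`, the exceptional zero of the X₁-Laguerre polynomial satisfies
`x̂_{1,1} = -(α+1)`, `x̂_{n,1} ∈ (-α-1, -α)` for `n ≥ 2`, and `x̂_{n,1} ∈ [-α-1, -α)` for all
`n ≥ 1`. -/
theorem X1laguerre_exceptional_zero_location
    (α : ℝ) (hα : 0 < α) (z : ℕ → ℕ → ℝ)
    (hz : ∀ n : ℕ, 1 ≤ n → EnumZeros (X1laguerreL α n) n (z n)) :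
    z 1 1 = -(α + 1) ∧
      (∀ n : ℕ, 2 ≤ n → -α - 1 < z n 1 ∧ z n 1 < -α) ∧
      (∀ n : ℕ, 1 ≤ n → -α - 1 ≤ z n 1 ∧ z n 1 < -α) := by
  have first : z 1 1 = -(α + 1) := by
    have : X1laguerreL α 1 (z 1 1) = 0 := ((hz 1 le_rfl).isLeast le_rfl).1
    rw [X1laguerreL_one] at this
    linarith
  have later (n : ℕ) (hn : 2 ≤ n) : -α - 1 < z n 1 ∧ z n 1 < -α :=
    X1laguerreL_least_zero_mem_Ioo hα hn ((hz n (by omega)).isLeast (by omega))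
  refine ⟨first, later, fun n hn => ?_⟩
  rcases hn.eq_or_lt with rfl | hn
  · rw [first]
    constructor <;> linarith
  · exact (later n hn).imp_left le_of_lt
end

section
/- Let α > 0, β > −1 and n ≥ 1. Then P_n^{(α,β)}(x) < P_{n+1}^{(α,β)}(x) for every x > 1. -/
open Finset Filter

/-!
With `y = (x - 1) / 2`, `z = (x + 1) / 2`, let `T(s, m)` be the summand of `P_{s+m}` carrying `y ^ s`.
Peeling the top factor off each product gives
`(m + 1) (β + m + 1) T(s, m + 1) = (α + s + m + 1) (β + s + m + 1) z T(s, m)`, and for `α > 0`,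
`β > -1`, `z > 1` the factor on the right is the larger one. So each summand of `P_n` is beaten by
the summand of `P_{n+1}` with the same power of `y`, and `P_{n+1}` has one more positive summand.
-/

noncomputable def jacobiTerm (α β : ℝ) (s m : ℕ) (y z : ℝ) : ℝ :=
  ((∏ j ∈ Icc (s + 1) (s + m), (α + (j : ℝ))) / (m.factorial : ℝ)) *
    ((∏ j ∈ Icc (m + 1) (s + m), (β + (j : ℝ))) / (s.factorial : ℝ)) * y ^ s * z ^ m

lemma jacobiP_eq_sum_jacobiTerm (α β : ℝ) (n : ℕ) (x : ℝ) :
    jacobiP α β n x =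
      ∑ s ∈ range (n + 1), jacobiTerm α β s (n - s) ((x - 1) / 2) ((x + 1) / 2) := by
  refine sum_congr rfl fun s hs => ?_
  rw [jacobiTerm, Nat.add_sub_cancel' (Nat.lt_succ_iff.mp (mem_range.mp hs))]

lemma prod_add_natCast_pos {γ : ℝ} (hγ : -1 < γ) {a : ℕ} (ha : 1 ≤ a) (b : ℕ) :
    0 < ∏ j ∈ Icc a b, (γ + (j : ℝ)) :=
  prod_pos fun j hj => by
    have : (1 : ℝ) ≤ j := by exact_mod_cast ha.trans (mem_Icc.mp hj).1
    linarith

lemma jacobiTerm_pos {α β : ℝ} (hα : -1 < α) (hβ : -1 < β) (s m : ℕ) {y z : ℝ}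
    (hy : 0 < y) (hz : 0 < z) : 0 < jacobiTerm α β s m y z := by
  have hA := prod_add_natCast_pos hα (Nat.le_add_left 1 s) (s + m)
  have hB := prod_add_natCast_pos hβ (Nat.le_add_left 1 m) (s + m)
  unfold jacobiTerm
  positivity

lemma jacobiTerm_succ_right (α β : ℝ) (s m : ℕ) (y z : ℝ) :
    (m + 1) * (β + (m + 1)) * jacobiTerm α β s (m + 1) y z =
      (α + (s + m + 1)) * (β + (s + m + 1)) * z * jacobiTerm α β s m y z := by
  have hA : ∏ j ∈ Icc (s + 1) (s + m + 1), (α + (j : ℝ)) =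
      (∏ j ∈ Icc (s + 1) (s + m), (α + (j : ℝ))) * (α + (s + m + 1)) := by
    rw [prod_Icc_succ_top (by omega)]
    push_cast; rfl
  have hB : (β + (m + 1)) * ∏ j ∈ Icc (m + 1 + 1) (s + m + 1), (β + (j : ℝ)) =
      (∏ j ∈ Icc (m + 1) (s + m), (β + (j : ℝ))) * (β + (s + m + 1)) := by
    calc (β + (m + 1)) * ∏ j ∈ Icc (m + 1 + 1) (s + m + 1), (β + (j : ℝ))
        = ∏ j ∈ Icc (m + 1) (s + m + 1), (β + (j : ℝ)) := by
          rw [Icc_add_one_left_eq_Ioc]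
          exact_mod_cast mul_prod_Ioc_eq_prod_Icc (f := fun j : ℕ => β + (j : ℝ)) (by omega)
      _ = _ := by
          rw [prod_Icc_succ_top (by omega)]
          push_cast; rfl
  unfold jacobiTerm
  rw [← Nat.add_assoc, hA, Nat.factorial_succ]
  push_cast
  field_simp
  linear_combination
    (∏ j ∈ Icc (s + 1) (s + m), (α + (j : ℝ))) * (α + (s + m + 1)) * y ^ s * z ^ (m + 1) * hB

lemma jacobiTerm_lt_succ_right {α β : ℝ} (hα : 0 < α) (hβ : -1 < β) (s m : ℕ) {y z : ℝ}
    (hy : 0 < y) (hz : 1 < z) : jacobiTerm α β s m y z < jacobiTerm α β s (m + 1) y z := by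
  have hT : 0 < jacobiTerm α β s m y z := jacobiTerm_pos (by linarith) hβ s m hy (by linarith)
  have hs : (0 : ℝ) ≤ s := s.cast_nonneg
  have hβm : 0 < β + (m + 1) := by linarith [(m.cast_nonneg : (0 : ℝ) ≤ m)]
  have hratio : (m + 1) * (β + (m + 1)) < (α + (s + m + 1)) * (β + (s + m + 1)) * z :=
    calc (m + 1) * (β + (m + 1)) < (α + (s + m + 1)) * (β + (m + 1)) :=
        mul_lt_mul_of_pos_right (by linarith) hβm
      _ ≤ (α + (s + m + 1)) * (β + (s + m + 1)) := by gcongr; linarith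
      _ < (α + (s + m + 1)) * (β + (s + m + 1)) * z :=
        lt_mul_of_one_lt_right (by nlinarith) hz
  refine lt_of_mul_lt_mul_left ?_ (by positivity : (0 : ℝ) ≤ (m + 1) * (β + (m + 1)))
  rw [jacobiTerm_succ_right]
  exact mul_lt_mul_of_pos_right hratio hT

theorem jacobiP_lt_jacobiP_succ_general
    (α β : ℝ) (hα : 0 < α) (hβ : -1 < β) (n : ℕ)
    (x : ℝ) (hx : 1 < x) :
    jacobiP α β n x < jacobiP α β (n + 1) x := by
  have hy : 0 < (x - 1) / 2 := by linarith
  have hz : 1 < (x + 1) / 2 := by linarith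
  rw [jacobiP_eq_sum_jacobiTerm, jacobiP_eq_sum_jacobiTerm, sum_range_succ _ (n + 1)]
  calc ∑ s ∈ range (n + 1), jacobiTerm α β s (n - s) ((x - 1) / 2) ((x + 1) / 2)
      < ∑ s ∈ range (n + 1), jacobiTerm α β s (n + 1 - s) ((x - 1) / 2) ((x + 1) / 2) := by
        refine sum_lt_sum_of_nonempty nonempty_range_add_one fun s hs => ?_
        rw [Nat.sub_add_comm (Nat.lt_succ_iff.mp (mem_range.mp hs))]
        exact jacobiTerm_lt_succ_right hα hβ s (n - s) hy hz
    _ < _ := lt_add_of_pos_right _ (jacobiTerm_pos (by linarith) hβ _ _ hy (by linarith))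

/-- For `α > 0`, `β > -1` and `n ≥ 1`, we have
`P_n^{(α,β)}(x) < P_{n+1}^{(α,β)}(x)` for every `x > 1`. -/
theorem jacobiP_lt_jacobiP_succ
    (α β : ℝ) (hα : 0 < α) (hβ : -1 < β) (n : ℕ) (hn : 1 ≤ n)
    (x : ℝ) (hx : 1 < x) :
    jacobiP α β n x < jacobiP α β (n + 1) x :=
  jacobiP_lt_jacobiP_succ_general α β hα hβ n x hx
end

section
/- Let α > 0, n ≥ 1 and x a fixed real number. Then lim_{β→∞} (2n−2+α+β)·P̂_n^{(α,β)}(1 − 2x/β) = −L̂_n^{(α)}(x). -/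
open Finset Filter

/-!
Under the substitution `y = 1 - 2x/β` the `s`-th term of the Jacobi sum carries
`((y - 1)/2)^s = (-x/β)^s`, and `β^{-s} ∏_{j=m-s+1}^{m} (β + j) → 1`, so
`P_m^{(α,β)}(1 - 2x/β) → L_m^{(α)}(x)` term by term. In `(2n-2+α+β) P̂_n^{(α,β)}` the factor
`-(1/2)(2n-2+α+β)(y - b) = (2n-2+α+β)(x/β + α/(β-α))` tends to `x + α` and `b → 1`, which
turns the X₁-Jacobi recurrence into the negative of the X₁-Laguerre one.
-/

open Topology

theorem tendsto_add_div_add_atTop (a b : ℝ) :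
    Tendsto (fun β : ℝ => (β + a) / (β + b)) atTop (𝓝 1) := by
  have hlim : Tendsto (fun β : ℝ => 1 + (a - b) / (β + b)) atTop (𝓝 (1 + 0)) :=
    tendsto_const_nhds.add
      (tendsto_const_nhds.div_atTop (tendsto_atTop_add_const_right _ _ tendsto_id))
  rw [add_zero] at hlim
  refine hlim.congr' ?_
  filter_upwards [eventually_gt_atTop (-b)] with β hβ
  have : β + b ≠ 0 := by linarith
  field_simp
  ring

theorem tendsto_prod_add_div_pow_card {ι : Type*} (S : Finset ι) (a : ι → ℝ) :
    Tendsto (fun β : ℝ => (∏ i ∈ S, (β + a i)) / β ^ #S) atTop (𝓝 1) := by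
  have hlim : Tendsto (fun β : ℝ => ∏ i ∈ S, (β + a i) / (β + 0)) atTop (𝓝 (∏ _i ∈ S, 1)) :=
    tendsto_finsetProd _ fun i _ => tendsto_add_div_add_atTop (a i) 0
  rw [prod_const_one] at hlim
  refine hlim.congr fun β => ?_
  rw [add_zero, prod_div_distrib, prod_const]

theorem tendsto_jacobiP_one_sub_div_laguerreL (α x : ℝ) (m : ℕ) :
    Tendsto (fun β : ℝ => jacobiP α β m (1 - 2 * x / β)) atTop (𝓝 (laguerreL α m x)) := by
  unfold jacobiP laguerreL
  refine tendsto_finsetSum _ fun s hs => ?_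
  have hcard : #(Icc (m - s + 1) m) = s := by
    rw [Nat.card_Icc]
    have := mem_range.mp hs
    omega
  set C : ℝ := (∏ j ∈ Icc (s + 1) m, (α + (j : ℝ))) / (m - s).factorial
  set B : ℝ → ℝ := fun β => (∏ j ∈ Icc (m - s + 1) m, (β + (j : ℝ))) / β ^ s
  have hB : Tendsto B atTop (𝓝 1) := by
    simpa only [B, hcard] using
      tendsto_prod_add_div_pow_card (Icc (m - s + 1) m) (fun j : ℕ => (j : ℝ))
  have hy : Tendsto (fun β : ℝ => 1 - x / β) atTop (𝓝 (1 - 0)) :=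
    tendsto_const_nhds.sub (tendsto_const_nhds.div_atTop tendsto_id)
  have hlim := (((hB.const_mul C).div_const s.factorial).mul_const ((-x) ^ s)).mul
    (hy.pow (m - s))
  rw [show C * 1 / s.factorial * (-x) ^ s * (1 - 0) ^ (m - s)
      = (-1) ^ s / s.factorial * C * x ^ s by rw [neg_pow]; ring] at hlim
  refine hlim.congr' ?_
  filter_upwards [eventually_ne_atTop 0] with β hβ
  rw [show (1 - 2 * x / β - 1) / 2 = -x / β by ring,
    show (1 - 2 * x / β + 1) / 2 = 1 - x / β by ring, div_pow]
  simp only [B]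
  field_simp

theorem mul_X1jacobiP (α β y : ℝ) (n : ℕ) (h : 2 * (n : ℝ) - 2 + α + β ≠ 0) :
    (2 * (n : ℝ) - 2 + α + β) * X1jacobiP α β n y =
      -(1 / 2) * (2 * (n : ℝ) - 2 + α + β) * (y - (β + α) / (β - α)) * jacobiP α β (n - 1) y +
        ((β + α) / (β - α) * jacobiP α β (n - 1) y -
          if 2 ≤ n then jacobiP α β (n - 2) y else 0) := by
  rw [X1jacobiP, mul_add, mul_div_cancel₀ _ h]
  ring

theorem X1jacobi_tendsto_neg_X1laguerre_general
    (α : ℝ) (n : ℕ) (x : ℝ) :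
    Filter.Tendsto
      (fun β : ℝ => (2 * (n : ℝ) - 2 + α + β) * X1jacobiP α β n (1 - 2 * x / β))
      Filter.atTop (nhds (-(X1laguerreL α n x))) := by
  set c : ℝ := 2 * (n : ℝ) - 2 + α
  have hb : Tendsto (fun β : ℝ => (β + α) / (β - α)) atTop (𝓝 1) := by
    simpa only [sub_eq_add_neg] using tendsto_add_div_add_atTop α (-α)
  have hcoeff : Tendsto (fun β : ℝ => -(1 / 2) * (c + β) * (1 - 2 * x / β - (β + α) / (β - α)))
      atTop (𝓝 (x + α)) := by
    have hlim := ((tendsto_add_div_add_atTop c 0).const_mul x).add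
      ((tendsto_add_div_add_atTop c (-α)).const_mul α)
    rw [mul_one, mul_one] at hlim
    refine hlim.congr' ?_
    filter_upwards [eventually_ne_atTop 0, eventually_gt_atTop α] with β hβ hβα
    have : β - α ≠ 0 := sub_ne_zero.mpr hβα.ne'
    rw [add_zero, ← sub_eq_add_neg]
    field_simp
    ring
  have hP := tendsto_jacobiP_one_sub_div_laguerreL α x (n - 1)
  have hQ : Tendsto (fun β : ℝ => if 2 ≤ n then jacobiP α β (n - 2) (1 - 2 * x / β) else 0)
      atTop (𝓝 (if 2 ≤ n then laguerreL α (n - 2) x else 0)) := by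
    split_ifs
    exacts [tendsto_jacobiP_one_sub_div_laguerreL α x (n - 2), tendsto_const_nhds]
  have hlim := (hcoeff.mul hP).add ((hb.mul hP).sub hQ)
  rw [show (x + α) * laguerreL α (n - 1) x + (1 * laguerreL α (n - 1) x -
      (if 2 ≤ n then laguerreL α (n - 2) x else 0)) = -X1laguerreL α n x by
    rw [X1laguerreL]; ring] at hlim
  refine hlim.congr' ?_
  filter_upwards [eventually_ne_atTop (-c)] with β hβ
  rw [mul_X1jacobiP α β _ n (by rwa [← sub_ne_zero, sub_neg_eq_add, add_comm] at hβ)]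

/-- For `α > 0`, `n ≥ 1` and fixed real `x`,
`lim_{β→∞} (2n-2+α+β)·P̂_n^{(α,β)}(1 - 2x/β) = -L̂_n^{(α)}(x)`. -/
theorem X1jacobi_tendsto_neg_X1laguerre
    (α : ℝ) (hα : 0 < α) (n : ℕ) (hn : 1 ≤ n) (x : ℝ) :
    Filter.Tendsto
      (fun β : ℝ => (2 * (n : ℝ) - 2 + α + β) * X1jacobiP α β n (1 - 2 * x / β))
      Filter.atTop (nhds (-(X1laguerreL α n x))) :=
  X1jacobi_tendsto_neg_X1laguerre_general α n x
end

section
/- Let α > 0 and n ≥ 1, and define u_n : (0,∞) → ℝ by u_n(x) = e^{−x/2} x^{(α+1)/2} (x+α)^{−1} · L̂_n^{(α)}(x). Then u_n satisfies u_n''(x) + λ_{n,4}(x)·u_n(x) = 0 for all x > 0, where λ_{n,4}(x) = [−x⁴ + 2(2n−1)x³ + (2α² + 4(2n−1)α − 3)x² + 2α((2n−1)α + 3)x + α²(1−α²)] / (4x²(x+α)²). -/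
/-! The X₁-Laguerre equation in normal form reads `y'' + P y' + Q y = 0` with
`P = -(x - α)(x + α + 1) / (x (x + α)) = -1 + (α + 1)/x - 2/(x + α)` and
`Q = (n x + (n - 2) α) / (x (x + α))`. The prefactor `φ = e^{-x/2} x^{(α+1)/2} (x + α)⁻¹`
satisfies `φ' = (P/2) φ`, so `u = φ y` is the Liouville normal form of `y`:
`u'' + (Q - P²/4 - P'/2) u = 0`, and `Q - P²/4 - P'/2 = λ_{n,4}` is an identity of rational
functions. The X₁-Laguerre equation itself is a polynomial identity, a combination of the
Laguerre equations for `L_{n-1}`, `L_{n-2}` and of `L_{m+1}' = L_m' - L_m`, both of which reduce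
to identities between the coefficients `binom(m + α, m - k)`. -/

open Finset Filter

open Polynomial Topology

lemma prod_Icc_eq_mul_prod_Icc_succ {M : Type*} [CommMonoid M] {a b : ℕ} (h : a ≤ b)
    (f : ℕ → M) :
    ∏ j ∈ Icc a b, f j = f a * ∏ j ∈ Icc (a + 1) b, f j := by
  rw [Icc_add_one_left_eq_Ioc, mul_prod_Ioc_eq_prod_Icc h]

/-- The generalized binomial coefficient `binom(m + α, m - k)`, set to `0` for `k > m`; then
`laguerreL α m x = ∑ k, (-1) ^ k / k! * laguerreBinom α m k * x ^ k`. -/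
noncomputable def laguerreBinom (α : ℝ) (m k : ℕ) : ℝ :=
  if k ≤ m then (∏ j ∈ Icc (k + 1) m, (α + j)) / (m - k).factorial else 0

lemma laguerreBinom_self (α : ℝ) (m : ℕ) : laguerreBinom α m m = 1 := by
  simp [laguerreBinom]

lemma laguerreBinom_of_lt {α : ℝ} {m k : ℕ} (h : m < k) : laguerreBinom α m k = 0 :=
  if_neg (by omega)

lemma add_mul_laguerreBinom_succ (α : ℝ) (m k : ℕ) :
    (k + 1 + α) * laguerreBinom α m (k + 1) = (m - k) * laguerreBinom α m k := by
  rcases lt_trichotomy k m with hkm | rfl | hmk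
  · obtain ⟨d, rfl⟩ : ∃ d, m = k + 1 + d := ⟨m - (k + 1), by omega⟩
    simp only [laguerreBinom, if_pos (show k + 1 ≤ k + 1 + d by omega),
      if_pos (show k ≤ k + 1 + d by omega),
      prod_Icc_eq_mul_prod_Icc_succ (show k + 1 ≤ k + 1 + d by omega),
      show k + 1 + d - (k + 1) = d by omega, show k + 1 + d - k = d + 1 by omega,
      Nat.factorial_succ]
    push_cast
    field_simp
    ring
  · simp [laguerreBinom_of_lt]
  · simp [laguerreBinom_of_lt hmk, laguerreBinom_of_lt (show m < k + 1 by omega)]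

lemma laguerreBinom_succ_succ (α : ℝ) (m k : ℕ) :
    laguerreBinom α (m + 1) (k + 1) = laguerreBinom α m (k + 1) + laguerreBinom α m k := by
  rcases lt_trichotomy k m with hkm | rfl | hmk
  · obtain ⟨d, rfl⟩ : ∃ d, m = k + 1 + d := ⟨m - (k + 1), by omega⟩
    have htop : ∏ j ∈ Icc (k + 1 + 1) (k + 1 + d + 1), (α + j) =
        (∏ j ∈ Icc (k + 1 + 1) (k + 1 + d), (α + j)) * (α + (k + 1 + d + 1 : ℕ)) :=
      prod_Icc_succ_top (by omega) _
    simp only [laguerreBinom, if_pos (show k + 1 ≤ k + 1 + d + 1 by omega),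
      if_pos (show k + 1 ≤ k + 1 + d by omega), if_pos (show k ≤ k + 1 + d by omega),
      prod_Icc_eq_mul_prod_Icc_succ (show k + 1 ≤ k + 1 + d by omega), htop,
      show k + 1 + d + 1 - (k + 1) = d + 1 by omega, show k + 1 + d - (k + 1) = d by omega,
      show k + 1 + d - k = d + 1 by omega, Nat.factorial_succ]
    push_cast
    field_simp
    ring
  · simp [laguerreBinom_self, laguerreBinom_of_lt]
  · simp [laguerreBinom_of_lt hmk, laguerreBinom_of_lt (show m < k + 1 by omega),
      laguerreBinom_of_lt (show m + 1 < k + 1 by omega)]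

noncomputable def laguerrePoly (α : ℝ) (m : ℕ) : ℝ[X] :=
  ∑ k ∈ range (m + 1), C ((-1) ^ k / k.factorial * laguerreBinom α m k) * X ^ k

lemma eval_laguerrePoly (α : ℝ) (m : ℕ) (x : ℝ) :
    (laguerrePoly α m).eval x = laguerreL α m x := by
  simp only [laguerrePoly, laguerreL, eval_finsetSum, eval_mul, eval_C, eval_pow, eval_X]
  refine sum_congr rfl fun k hk => ?_
  rw [laguerreBinom, if_pos (by simpa [Nat.lt_succ_iff] using hk), mul_assoc]

lemma coeff_laguerrePoly (α : ℝ) (m k : ℕ) :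
    (laguerrePoly α m).coeff k = (-1) ^ k / k.factorial * laguerreBinom α m k := by
  simp only [laguerrePoly, finsetSum_coeff, coeff_C_mul_X_pow, sum_ite_eq, mem_range]
  split_ifs with hk
  · rfl
  · rw [laguerreBinom_of_lt (by omega), mul_zero]

lemma coeff_derivative_laguerrePoly (α : ℝ) (m k : ℕ) :
    (derivative (laguerrePoly α m)).coeff k =
      -((-1) ^ k / k.factorial * laguerreBinom α m (k + 1)) := by
  rw [coeff_derivative, coeff_laguerrePoly, Nat.factorial_succ]
  push_cast
  field_simp
  ring

theorem laguerrePoly_ode (α : ℝ) (m : ℕ) :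
    X * derivative (derivative (laguerrePoly α m))
      + (C α + 1 - X) * derivative (laguerrePoly α m) + (m : ℝ[X]) * laguerrePoly α m = 0 := by
  ext k
  simp only [add_mul, sub_mul, one_mul, coeff_add, coeff_sub, coeff_C_mul, coeff_natCast_mul,
    coeff_zero, coeff_derivative_laguerrePoly, coeff_laguerrePoly]
  rcases k with _ | k
  · have h := add_mul_laguerreBinom_succ α m 0
    simp only [coeff_X_mul_zero, pow_zero, Nat.factorial_zero, Nat.cast_one, div_one,
      zero_add] at h ⊢
    push_cast at h
    linear_combination -h
  · have h := add_mul_laguerreBinom_succ α m (k + 1)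
    rw [coeff_X_mul, coeff_X_mul, coeff_derivative (derivative _), coeff_derivative_laguerrePoly,
      coeff_derivative_laguerrePoly, Nat.factorial_succ]
    push_cast at h ⊢
    field_simp
    linear_combination -(-1) ^ (k + 1) * h

theorem derivative_laguerrePoly_succ (α : ℝ) (m : ℕ) :
    derivative (laguerrePoly α (m + 1)) = derivative (laguerrePoly α m) - laguerrePoly α m := by
  ext k
  simp only [coeff_sub, coeff_derivative_laguerrePoly, coeff_laguerrePoly, laguerreBinom_succ_succ]
  ring

lemma laguerrePoly_zero (α : ℝ) : laguerrePoly α 0 = 1 := by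
  simp [laguerrePoly, laguerreBinom_self]

noncomputable def X1laguerrePoly (α : ℝ) (n : ℕ) : ℝ[X] :=
  -(X + C α + 1) * laguerrePoly α (n - 1) + if 2 ≤ n then laguerrePoly α (n - 2) else 0

lemma eval_X1laguerrePoly (α : ℝ) (n : ℕ) (x : ℝ) :
    (X1laguerrePoly α n).eval x = X1laguerreL α n x := by
  simp only [X1laguerrePoly, X1laguerreL, eval_add, eval_mul, eval_neg, eval_X, eval_C, eval_one,
    eval_laguerrePoly, apply_ite (eval x), eval_zero]

theorem X1laguerrePoly_ode (α : ℝ) {n : ℕ} (hn : 1 ≤ n) :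
    X * (X + C α) * derivative (derivative (X1laguerrePoly α n))
      - (X - C α) * (X + C α + 1) * derivative (X1laguerrePoly α n)
      + ((n : ℝ[X]) * X + ((n : ℝ[X]) - 2) * C α) * X1laguerrePoly α n = 0 := by
  obtain ⟨m, rfl⟩ : ∃ m, n = m + 1 := ⟨n - 1, by omega⟩
  rcases m with _ | m
  · simp [X1laguerrePoly, laguerrePoly_zero]
    ring
  · have hode := laguerrePoly_ode α (m + 1)
    push_cast at hode
    simp only [X1laguerrePoly, if_pos (show 2 ≤ m + 1 + 1 by omega),
      show m + 1 + 1 - 1 = m + 1 by omega, show m + 1 + 1 - 2 = m by omega,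
      derivative_add, derivative_mul, derivative_neg, derivative_X, derivative_C, derivative_one,
      derivative_zero]
    push_cast
    linear_combination (X + C α) * laguerrePoly_ode α m
      - (X + C α) * (X + C α + 1) * hode
      + 2 * X * derivative_laguerrePoly_succ α m

theorem liouville_normal_form {φ y y' P : ℝ → ℝ} {x y'' P' Q : ℝ}
    (hφ : ∀ᶠ t in 𝓝 x, HasDerivAt φ (P t / 2 * φ t) t)
    (hy : ∀ᶠ t in 𝓝 x, HasDerivAt y (y' t) t)
    (hy' : HasDerivAt y' y'' x) (hP : HasDerivAt P P' x) (hode : y'' + P x * y' x + Q * y x = 0) :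
    deriv (deriv fun t => φ t * y t) x + (Q - P x ^ 2 / 4 - P' / 2) * (φ x * y x) = 0 := by
  have hderiv :
      deriv (fun t => φ t * y t) =ᶠ[𝓝 x] fun t => P t / 2 * φ t * y t + φ t * y' t := by
    filter_upwards [hφ, hy] with t hφt hyt using (hφt.mul hyt).deriv
  have hφx := hφ.self_of_nhds
  have hderiv' :=
    (((hP.div_const 2).fun_mul hφx).fun_mul hy.self_of_nhds).fun_add (hφx.fun_mul hy')
  rw [hderiv.deriv_eq, hderiv'.deriv]
  linear_combination φ x * hode

lemma hasDerivAt_exp_mul_rpow_mul_inv {α r t : ℝ} (ht : t ≠ 0) (htα : t + α ≠ 0) :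
    HasDerivAt (fun s => Real.exp (-s / 2) * s ^ r * (s + α)⁻¹)
      ((-1 / 2 + r / t - 1 / (t + α)) * (Real.exp (-t / 2) * t ^ r * (t + α)⁻¹)) t := by
  have h := ((((hasDerivAt_neg t).div_const 2).exp).fun_mul
    (Real.hasDerivAt_rpow_const (p := r) (Or.inl ht))).fun_mul
    (((hasDerivAt_id' t).add_const α).fun_inv htα)
  refine h.congr_deriv ?_
  rw [Real.rpow_sub_one ht]
  field_simp
  ring

/-- For `α > 0`, `n ≥ 1`, the function
`u_n(x) = e^{-x/2} x^{(α+1)/2} (x+α)⁻¹ L̂_n^{(α)}(x)` satisfies the Sturm–Liouville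
equation `u_n'' + λ_{n,4}·u_n = 0` on `(0,∞)`. -/
theorem X1laguerre_sturm_liouville
    (α : ℝ) (hα : 0 < α) (n : ℕ) (hn : 1 ≤ n) :
    ∀ x : ℝ, 0 < x →
      deriv (deriv (fun t : ℝ =>
          Real.exp (-t / 2) * t ^ ((α + 1) / 2) * (t + α)⁻¹ * X1laguerreL α n t)) x +
        ((-x ^ 4 + 2 * (2 * (n : ℝ) - 1) * x ^ 3 +
              (2 * α ^ 2 + 4 * (2 * (n : ℝ) - 1) * α - 3) * x ^ 2 +
              2 * α * ((2 * (n : ℝ) - 1) * α + 3) * x + α ^ 2 * (1 - α ^ 2)) /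
            (4 * x ^ 2 * (x + α) ^ 2)) *
          (Real.exp (-x / 2) * x ^ ((α + 1) / 2) * (x + α)⁻¹ * X1laguerreL α n x) = 0 := by
  intro x hx
  have hxα : x + α ≠ 0 := by positivity
  set p := X1laguerrePoly α n
  have hφ : ∀ᶠ t in 𝓝 x,
      HasDerivAt (fun s => Real.exp (-s / 2) * s ^ ((α + 1) / 2) * (s + α)⁻¹)
      ((-1 + (α + 1) / t - 2 / (t + α)) / 2 *
        (Real.exp (-t / 2) * t ^ ((α + 1) / 2) * (t + α)⁻¹)) t := by
    filter_upwards [Ioi_mem_nhds hx] with t (ht : 0 < t)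
    exact (hasDerivAt_exp_mul_rpow_mul_inv ht.ne' (by positivity)).congr_deriv (by ring)
  have hP : HasDerivAt (fun t => -1 + (α + 1) / t - 2 / (t + α))
      (-(α + 1) / x ^ 2 + 2 / (x + α) ^ 2) x := by
    have h := (((hasDerivAt_inv hx.ne').const_mul (α + 1)).const_add (-1)).fun_sub
      ((((hasDerivAt_id' x).add_const α).fun_inv hxα).const_mul 2)
    simp only [← div_eq_mul_inv] at h
    refine h.congr_deriv ?_
    field_simp
    ring
  have hode := congrArg (eval x) (X1laguerrePoly_ode α hn)
  simp only [eval_add, eval_sub, eval_mul, eval_X, eval_C, eval_natCast, eval_ofNat, eval_one,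
    eval_zero] at hode
  have key := liouville_normal_form (Q := (n * x + (n - 2) * α) / (x * (x + α))) hφ
    (Eventually.of_forall fun t => p.hasDerivAt t) (p.derivative.hasDerivAt x) hP
    (by field_simp; linear_combination hode)
  simp only [← eval_X1laguerrePoly]
  convert key using 2
  field_simp
  ring
end
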